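/- Let H be a partial building set in a geometric lattice L, and let S ⊆ H be an antichain with at least two elements. If S is H-nested, then the meet of S equals ⊥. -/

import Mathlib

/-- A finite lattice is geometric if it is atomistic and (upper) semimodular. -/
def IsGeomLat (L : Type) [Lattice L] [BoundedOrder L] [Fintype L] : Prop :=
  (∀ x : L, IsLUB {a : L | IsAtom a ∧ a ≤ x} x) ∧
  ∀ a b : L, a ⊓ b ⋖ a → b ⋖ a ⊔ b

/-- The set of factors `F(L,G;x) = max G_{≤x}` of an element `x` with respect to
a subset `G ⊆ L`. -/
def factorsOf {L : Type} [Lattice L] [BoundedOrder L] (G : Set L) (x : L) : Set L :=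
  {g | g ∈ G ∧ g ≤ x ∧ ∀ h ∈ G, h ≤ x → g ≤ h → g = h}

/-- A combinatorial building set in a (geometric) lattice `L`: a set `G` of
elements `> ⊥` such that for each `x > ⊥`, the join map from the product of the
lower intervals `[⊥, g]`, `g ∈ max G_{≤x}`, to `[⊥, x]` is a poset isomorphism
sending the `g`-th "unit vector" to `g`. -/
def IsBuildingSet (L : Type) [Lattice L] [BoundedOrder L] [Fintype L] [DecidableEq L]
    (G : Set L) : Prop :=
  (∀ g ∈ G, ⊥ < g) ∧
  ∀ x : L, ⊥ < x →
    ∃ φ : ((g : factorsOf G x) → ↥(Set.Iic (g : L))) ≃o ↥(Set.Iic x),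
      ∀ g : factorsOf G x,
        φ (fun h => if hh : h = g then ⟨(g : L), by simp [hh]⟩ else ⟨⊥, bot_le⟩) =
          ⟨(g : L), g.2.2.1⟩

/-- A partial building set `H` inside a building set `G`: `H ⊆ G`, `H` contains
all atoms, and the non-atomic part of `H` is an order filter of `G`. -/
def IsPartialBuilding (L : Type) [Lattice L] [BoundedOrder L] [Fintype L] [DecidableEq L]
    (G H : Set L) : Prop :=
  H ⊆ G ∧ {a : L | IsAtom a} ⊆ H ∧
  ∀ g ∈ H, ¬ IsAtom g → ∀ h ∈ G, g ≤ h → h ∈ H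

/-- `N` is `H`-nested: every antichain in `N` with at least two elements has its
join (computed in `L`) outside of `H`. -/
def IsNestedIn (L : Type) [Lattice L] [OrderBot L] (H : Set L) (N : Set L) : Prop :=
  ∀ S : Finset L, ↑S ⊆ N → 2 ≤ S.card → IsAntichain (· ≤ ·) (S : Set L) →
    S.sup id ∉ H

section BuildingSet

variable {L : Type} [Lattice L] [BoundedOrder L]

lemma exists_mem_factorsOf_ge [Finite L] (G : Set L) {q x : L} (hq : q ∈ G) (hqx : q ≤ x) :
    ∃ g ∈ factorsOf G x, q ≤ g := by
  obtain ⟨g, hqg, hg⟩ := Finite.exists_le_maximal (p := fun h => h ∈ G ∧ h ≤ x) ⟨hq, hqx⟩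
  exact ⟨g, ⟨hg.1.1, hg.1.2, fun h hG hx hgh => le_antisymm hgh (hg.2 ⟨hG, hx⟩ hgh)⟩, hqg⟩

variable [Fintype L] [DecidableEq L] {G : Set L}

/-- The factors of `x` are the images of the unit vectors under the join isomorphism, and
distinct unit vectors meet in `⊥`. -/
lemma IsBuildingSet.inf_eq_bot_of_mem_factorsOf (hG : IsBuildingSet L G) {x g₁ g₂ : L}
    (hx : ⊥ < x) (h₁ : g₁ ∈ factorsOf G x) (h₂ : g₂ ∈ factorsOf G x) (hne : g₁ ≠ g₂) :
    g₁ ⊓ g₂ = ⊥ := by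
  obtain ⟨φ, hφ⟩ := hG.2 x hx
  let e : factorsOf G x → (g : factorsOf G x) → ↥(Set.Iic (g : L)) := fun g h =>
    if hh : h = g then ⟨g, by simp [hh]⟩ else ⟨⊥, bot_le⟩
  have he : e ⟨g₁, h₁⟩ ⊓ e ⟨g₂, h₂⟩ = ⊥ := by
    funext h
    by_cases hh : h = ⟨g₁, h₁⟩
    · have hh₂ : h ≠ ⟨g₂, h₂⟩ := by rw [hh]; simpa using hne
      simp only [e, Pi.inf_apply, dif_neg hh₂]
      exact le_bot_iff.mp inf_le_right
    · simp only [e, Pi.inf_apply, dif_neg hh]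
      exact le_bot_iff.mp inf_le_left
  have hφe : (⟨g₁, h₁.2.1⟩ : ↥(Set.Iic x)) ⊓ ⟨g₂, h₂.2.1⟩ = ⊥ := by
    rw [← hφ ⟨g₁, h₁⟩, ← hφ ⟨g₂, h₂⟩, ← OrderIso.map_inf, he, OrderIso.map_bot]
  exact congrArg Subtype.val hφe

/-- A family in `G` with a common lower bound `≠ ⊥` lies below a single factor of its join,
which is therefore that factor. -/
lemma IsBuildingSet.sup_mem_of_inf_ne_bot (hG : IsBuildingSet L G) {S : Finset L}
    (hSG : ↑S ⊆ G) (hS : S.Nonempty) (hinf : S.inf id ≠ ⊥) : S.sup id ∈ G := by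
  obtain ⟨q₀, hq₀⟩ := hS
  have hq₀y : q₀ ≤ S.sup id := Finset.le_sup (f := id) hq₀
  have hy : ⊥ < S.sup id := (hG.1 q₀ (hSG hq₀)).trans_le hq₀y
  obtain ⟨g, hg, hq₀g⟩ := exists_mem_factorsOf_ge G (hSG hq₀) hq₀y
  have hle : ∀ q ∈ S, q ≤ g := by
    intro q hq
    obtain ⟨g', hg', hqg'⟩ := exists_mem_factorsOf_ge G (hSG hq) (Finset.le_sup (f := id) hq)
    obtain rfl : g = g' := by
      by_contra hne
      refine hinf (le_bot_iff.mp ?_)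
      rw [← hG.inf_eq_bot_of_mem_factorsOf hy hg hg' hne]
      exact le_inf ((Finset.inf_le hq₀).trans hq₀g) ((Finset.inf_le hq).trans hqg')
    exact hqg'
  exact (le_antisymm (Finset.sup_le (f := id) hle) hg.2.1) ▸ hg.1

end BuildingSet

lemma Finset.card_le_one_of_forall_isAtom {L : Type} [Lattice L] [BoundedOrder L] {S : Finset L}
    (hS : ∀ q ∈ S, IsAtom q) (hinf : S.inf id ≠ ⊥) : S.card ≤ 1 := by
  refine Finset.card_le_one.mpr fun p hp q hq => ?_
  by_contra hne
  refine hinf (le_bot_iff.mp ?_)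
  rw [← ((hS p hp).disjoint_of_ne (hS q hq) hne).eq_bot]
  exact le_inf (Finset.inf_le hp) (Finset.inf_le hq)

theorem nested_antichain_meet_bot_general {L : Type} [Lattice L] [BoundedOrder L] [Fintype L]
    [DecidableEq L] (G : Set L) (hG : IsBuildingSet L G)
    (H : Set L) (hH : IsPartialBuilding L G H)
    (S : Finset L) (hSH : ↑S ⊆ H) (hcard : 2 ≤ S.card)
    (hanti : IsAntichain (· ≤ ·) (S : Set L))
    (hnest : IsNestedIn L H ↑S) :
    S.inf id = ⊥ := by
  by_contra hinf
  have hSG : ↑S ⊆ G := hSH.trans hH.1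
  have hS : S.Nonempty := Finset.card_pos.mp (by omega)
  obtain ⟨q, hq, hq_atom⟩ : ∃ q ∈ S, ¬ IsAtom q := by
    by_contra! hatoms
    have := Finset.card_le_one_of_forall_isAtom hatoms hinf
    omega
  have hsupH : S.sup id ∈ H :=
    hH.2.2 q (hSH hq) hq_atom _ (hG.sup_mem_of_inf_ne_bot hSG hS hinf) (Finset.le_sup (f := id) hq)
  exact hnest S subset_rfl hcard hanti hsupH

/-- if `S ⊆ H` is an antichain with at least two elements which is
`H`-nested, then the meet of `S` is `⊥`. -/
theorem nested_antichain_meet_bot {L : Type} [Lattice L] [BoundedOrder L] [Fintype L]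
    [DecidableEq L] (hgeo : IsGeomLat L) (G : Set L) (hG : IsBuildingSet L G)
    (htop : ⊤ ∈ G) (H : Set L) (hH : IsPartialBuilding L G H)
    (S : Finset L) (hSH : ↑S ⊆ H) (hcard : 2 ≤ S.card)
    (hanti : IsAntichain (· ≤ ·) (S : Set L))
    (hnest : IsNestedIn L H ↑S) :
    S.inf id = ⊥ :=
  nested_antichain_meet_bot_general G hG H hH S hSH hcard hanti hnest
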